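/- arXiv:2110.15565 — 4 statements merged into one kernel-verified Lean document; each statement's English description precedes it below -/
import Mathlib

section
/- Let n, m be positive integers with m even, and let c : [m]^n → ℝ^{2n} be an array of real vectors such that (1) for every pair of voxels i, j ∈ [m]^n adjacent in coordinate t (i.e. j = i + e_t), we have (c_i)_{ξ} + (c_j)_{ξ} = 0 where ξ = 2t - (i_t mod 2), and (2) for every voxel i ∈ [m]^n, the sum over k ∈ [2n] of (c_i)_k exceeds 1/2. Then there exist a voxel i and a coordinate k ∈ [2n] with (c_i)_k > m/(4n). -/
/-- Voxels `i, j ∈ [m]^n` (0-based: values `0..m-1` representing `1..m`) are adjacent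
in coordinate `t` if `j_t = i_t + 1` and they agree elsewhere. -/
def adjacentVox {n m : ℕ} (i j : Fin n → Fin m) (t : Fin n) : Prop :=
  ((j t : ℕ) = (i t : ℕ) + 1) ∧ ∀ s : Fin n, s ≠ t → j s = i s

/-- `ξ(i,j,t) = 2t - (i_t mod 2)` (1-based), rendered 0-based as `2t + (i_t mod 2)`
where here `i t : Fin m` is the 0-based coordinate (1-based value is `(i t) + 1`). -/
def xiIdx {n m : ℕ} (i : Fin n → Fin m) (t : Fin n) : Fin (2 * n) :=
  ⟨2 * t.1 + (i t).1 % 2, by have := t.isLt; omega⟩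

section aux

variable {n m : ℕ}

/-- Flip used for the even-index cancellation. -/
def flipE (hme : Even m) (x : Fin m) : Fin m :=
  ⟨if x.1 % 2 = 0 then x.1 + 1 else x.1 - 1, by
    obtain ⟨r, hr⟩ := hme; have := x.isLt; split <;> omega⟩

/-- Flip used for the odd-index cancellation (on interior voxels). -/
def flipO (x : Fin m) : Fin m :=
  ⟨if x.1 % 2 = 1 then min (x.1 + 1) (m - 1) else x.1 - 1, by
    have := x.isLt; split <;> omega⟩

lemma adj_update (i : Fin n → Fin m) (t : Fin n) (v : Fin m) (hv : v.1 = (i t).1 + 1) :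
    adjacentVox i (Function.update i t v) t :=
  ⟨by simp [hv], fun s hs => Function.update_of_ne hs _ _⟩

lemma adj_update' (i : Fin n → Fin m) (t : Fin n) (v : Fin m) (hv : (i t).1 = v.1 + 1) :
    adjacentVox (Function.update i t v) i t := by
  refine ⟨by simp [hv], fun s hs => (Function.update_of_ne hs _ _).symm⟩

lemma sum_even_zero (hme : Even m)
    (c : (Fin n → Fin m) → Fin (2 * n) → ℝ)
    (h1 : ∀ (i j : Fin n → Fin m) (t : Fin n), adjacentVox i j t →
      c i (xiIdx i t) + c j (xiIdx i t) = 0)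
    (t : Fin n) (k : Fin (2 * n)) (hk : k.1 = 2 * t.1) :
    ∑ i : Fin n → Fin m, c i k = 0 := by
  obtain ⟨r, hr⟩ := hme
  refine Finset.sum_ninvolution (fun i => Function.update i t (flipE ⟨r, hr⟩ (i t)))
    (fun i => ?_) (fun i _ => ?_) (fun i => Finset.mem_univ _) (fun i => ?_)
  · by_cases h : (i t).1 % 2 = 0
    · have hadj := adj_update i t (flipE ⟨r, hr⟩ (i t)) (by simp [flipE, h])
      have := h1 i _ t hadj
      have hxi : xiIdx i t = k := by
        apply Fin.ext; simp [xiIdx, h, hk]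
      rwa [hxi] at this
    · have hlt : (i t).1 < m := (i t).isLt
      have hv : (i t).1 = (flipE ⟨r, hr⟩ (i t)).1 + 1 := by simp [flipE, h]; omega
      have hadj := adj_update' i t (flipE ⟨r, hr⟩ (i t)) hv
      have := h1 _ i t hadj
      have hxi : xiIdx (Function.update i t (flipE ⟨r, hr⟩ (i t))) t = k := by
        apply Fin.ext; simp [xiIdx, flipE, h, hk]; omega
      rw [hxi] at this; linarith
  · intro h
    have := congrFun h t
    simp only [Function.update_self] at this
    have := congrArg Fin.val this
    have hlt := (i t).isLt
    simp [flipE] at this; split at this <;> omega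
  · funext s
    by_cases hs : s = t
    · subst hs
      simp only [Function.update_self]
      apply Fin.ext
      have hlt := (i s).isLt
      simp [flipE]; split <;> split <;> omega
    · simp [Function.update_of_ne hs]

lemma sum_odd_interior (hme : Even m)
    (c : (Fin n → Fin m) → Fin (2 * n) → ℝ)
    (h1 : ∀ (i j : Fin n → Fin m) (t : Fin n), adjacentVox i j t →
      c i (xiIdx i t) + c j (xiIdx i t) = 0)
    (t : Fin n) (k : Fin (2 * n)) (hk : k.1 = 2 * t.1 + 1) :
    ∑ i ∈ Finset.univ.filter (fun i : Fin n → Fin m => (i t).1 ≠ 0 ∧ (i t).1 ≠ m - 1),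
      c i k = 0 := by
  obtain ⟨r, hr⟩ := hme
  refine Finset.sum_involution (fun i _ => Function.update i t (flipO (i t)))
    (fun i hi => ?_) (fun i hi _ => ?_) (fun i hi => ?_) (fun i hi => ?_)
  all_goals
    simp only [Finset.mem_filter, Finset.mem_univ, true_and] at hi
    obtain ⟨h0, h1'⟩ := hi
    have hlt := (i t).isLt
  · by_cases h : (i t).1 % 2 = 1
    · have hfv : (flipO (i t)).1 = (i t).1 + 1 := by simp [flipO, h]; omega
      have hadj := adj_update i t (flipO (i t)) hfv
      have := h1 i _ t hadj
      have hxi : xiIdx i t = k := by apply Fin.ext; simp [xiIdx, h, hk]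
      rwa [hxi] at this
    · have hfv : (i t).1 = (flipO (i t)).1 + 1 := by simp [flipO, h]; omega
      have hadj := adj_update' i t (flipO (i t)) hfv
      have := h1 _ i t hadj
      have hxi : xiIdx (Function.update i t (flipO (i t))) t = k := by
        apply Fin.ext
        show 2 * t.1 + ((Function.update i t (flipO (i t))) t).1 % 2 = k.1
        rw [Function.update_self]
        omega
      rw [hxi] at this; linarith
  · intro h
    have := congrArg Fin.val (congrFun h t)
    simp only [Function.update_self] at this
    simp [flipO] at this; split at this <;> omega
  · simp only [Finset.mem_filter, Finset.mem_univ, true_and, Function.update_self]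
    simp [flipO]; split <;> omega
  · funext s
    by_cases hs : s = t
    · subst hs
      simp only [Function.update_self]
      apply Fin.ext
      simp [flipO]; split <;> split <;> omega
    · simp [Function.update_of_ne hs]

lemma card_fixed (t : Fin n) (a : ℕ) (ha : a < m) :
    (Finset.univ.filter (fun i : Fin n → Fin m => (i t).1 = a)).card = m ^ (n - 1) := by
  have e : {i : Fin n → Fin m // (i t).1 = a} ≃ ({s : Fin n // s ≠ t} → Fin m) :=
    { toFun := fun i s => i.1 s.1
      invFun := fun g => ⟨fun s => if h : s = t then ⟨a, ha⟩ else g ⟨s, h⟩, by simp⟩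
      left_inv := fun i => by
        apply Subtype.ext; funext s
        by_cases h : s = t
        · subst h; simp only [dif_pos]; exact (Fin.ext i.2).symm
        · simp [h]
      right_inv := fun g => by funext s; simp [s.2] }
  rw [← Fintype.card_subtype, Fintype.card_congr e, Fintype.card_fun]
  have h1 : Fintype.card {s : Fin n // s ≠ t} = n - 1 := by
    simp [Fintype.card_subtype_compl]
  rw [h1, Fintype.card_fin]

/-- The equivalence `Fin n × Fin 2 ≃ Fin (2*n)` sending `(t,b)` to `2t+b`. -/
def pairEquiv (n : ℕ) : Fin n × Fin 2 ≃ Fin (2 * n) :=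
  { toFun := fun p => ⟨2 * p.1.1 + p.2.1, by have := p.1.isLt; have := p.2.isLt; omega⟩
    invFun := fun k => (⟨k.1 / 2, by have := k.isLt; omega⟩, ⟨k.1 % 2, by omega⟩)
    left_inv := fun p => by
      obtain ⟨⟨a, ha⟩, ⟨b, hb⟩⟩ := p
      simp only [Prod.mk.injEq]
      constructor <;> (apply Fin.ext; simp; omega)
    right_inv := fun k => by apply Fin.ext; simp; omega }

end aux

theorem stmt0 (n m : ℕ) (hn : 0 < n) (hm : 0 < m) (hme : Even m)
    (c : (Fin n → Fin m) → Fin (2 * n) → ℝ)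
    (h1 : ∀ (i j : Fin n → Fin m) (t : Fin n), adjacentVox i j t →
      c i (xiIdx i t) + c j (xiIdx i t) = 0)
    (h2 : ∀ i : Fin n → Fin m, (1:ℝ)/2 < ∑ k : Fin (2*n), c i k) :
    ∃ (i : Fin n → Fin m) (k : Fin (2*n)), (m : ℝ) / (4*n) < c i k := by
  by_contra hcon
  push_neg at hcon
  set B : ℝ := (m : ℝ) / (4 * n) with hB
  set T : ℝ := ∑ i : Fin n → Fin m, ∑ k : Fin (2 * n), c i k with hT
  -- lower bound
  have hcard : (Finset.univ : Finset (Fin n → Fin m)).card = m ^ n := by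
    simp [Fintype.card_fun]
  have hlow : ((m : ℝ) ^ n) / 2 < T := by
    have : ∑ _i : Fin n → Fin m, (1:ℝ)/2 < T := by
      haveI : Nonempty (Fin n → Fin m) := ⟨fun _ => ⟨0, hm⟩⟩
      apply Finset.sum_lt_sum_of_nonempty
      · exact Finset.univ_nonempty
      · intro i _; exact h2 i
    rw [Finset.sum_const, hcard, nsmul_eq_mul] at this
    push_cast at this
    linarith
  -- upper bound
  have hup : T ≤ (m : ℝ) ^ n / 2 := by
    have hTc : T = ∑ k : Fin (2 * n), ∑ i : Fin n → Fin m, c i k := Finset.sum_comm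
    have hTe : T = ∑ p : Fin n × Fin 2, ∑ i : Fin n → Fin m, c i (pairEquiv n p) := by
      rw [hTc]
      exact (Fintype.sum_equiv (pairEquiv n) _ _ (fun p => rfl)).symm
    rw [hTe, Fintype.sum_prod_type]
    have hbound : ∀ t : Fin n,
        ∑ b : Fin 2, ∑ i : Fin n → Fin m, c i (pairEquiv n (t, b)) ≤
          (2 * m ^ (n - 1) : ℕ) * B := by
      intro t
      rw [Fin.sum_univ_two]
      have h0 : ∑ i : Fin n → Fin m, c i (pairEquiv n (t, 0)) = 0 := by
        apply sum_even_zero hme c h1 t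
        simp [pairEquiv]
      rw [h0, zero_add]
      -- odd part
      set k : Fin (2 * n) := pairEquiv n (t, 1) with hkdef
      have hk : k.1 = 2 * t.1 + 1 := by simp [hkdef, pairEquiv]
      have hsplit := Finset.sum_filter_add_sum_filter_not Finset.univ
        (fun i : Fin n → Fin m => (i t).1 ≠ 0 ∧ (i t).1 ≠ m - 1) (fun i => c i k)
      have hint := sum_odd_interior hme c h1 t k hk
      have hbd : ∑ i ∈ Finset.univ.filter
          (fun i : Fin n → Fin m => ¬((i t).1 ≠ 0 ∧ (i t).1 ≠ m - 1)), c i k ≤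
          (2 * m ^ (n - 1) : ℕ) * B := by
        have hBpos : 0 ≤ B := by
          rw [hB]; positivity
        have hcardle : (Finset.univ.filter
            (fun i : Fin n → Fin m => ¬((i t).1 ≠ 0 ∧ (i t).1 ≠ m - 1))).card ≤
            2 * m ^ (n - 1) := by
          have hsub : Finset.univ.filter
              (fun i : Fin n → Fin m => ¬((i t).1 ≠ 0 ∧ (i t).1 ≠ m - 1)) ⊆
              Finset.univ.filter (fun i : Fin n → Fin m => (i t).1 = 0) ∪
              Finset.univ.filter (fun i : Fin n → Fin m => (i t).1 = m - 1) := by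
            intro i hi
            simp only [Finset.mem_filter, Finset.mem_univ, true_and, not_and_or,
              not_not] at hi
            simp only [Finset.mem_union, Finset.mem_filter, Finset.mem_univ, true_and]
            tauto
          calc _ ≤ _ := Finset.card_le_card hsub
            _ ≤ _ := Finset.card_union_le _ _
            _ ≤ 2 * m ^ (n - 1) := by
                rw [card_fixed t 0 hm, card_fixed t (m - 1) (by omega)]; omega
        calc ∑ i ∈ _, c i k ≤ (Finset.univ.filter
              (fun i : Fin n → Fin m => ¬((i t).1 ≠ 0 ∧ (i t).1 ≠ m - 1))).card • B := by
              apply Finset.sum_le_card_nsmul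
              intro i _; exact hcon i k
          _ ≤ (2 * m ^ (n - 1) : ℕ) * B := by
              rw [nsmul_eq_mul]
              exact mul_le_mul_of_nonneg_right (by exact_mod_cast hcardle) hBpos
      linarith [hsplit, hint, hbd]
    calc ∑ t : Fin n, ∑ b : Fin 2, ∑ i : Fin n → Fin m, c i (pairEquiv n (t, b))
        ≤ ∑ _t : Fin n, ((2 * m ^ (n - 1) : ℕ) * B : ℝ) :=
          Finset.sum_le_sum (fun t _ => hbound t)
      _ = (m : ℝ) ^ n / 2 := by
          rw [Finset.sum_const, Finset.card_univ, Fintype.card_fin, nsmul_eq_mul, hB]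
          have hmn : (m : ℝ) ^ (n - 1) * m = (m : ℝ) ^ n := by
            rw [← pow_succ]; congr 1; omega
          have hn' : (n : ℝ) ≠ 0 := by positivity
          push_cast
          field_simp
          ring_nf
          nlinarith [hmn]
  linarith
end

section
/- Suppose α₁,…,αₙ are real numbers and g₁,…,g_{2n+1} : [0,1] → [0,1] are continuous functions such that for every continuous f : [0,1]^n → ℝ there exists a continuous h : ℝ → ℝ with f(x₁,…,xₙ) = Σ_{k=1}^{2n+1} h(Σ_{i=1}^n α_i g_k(x_i)) for all x ∈ [0,1]^n. If the map ψ : [0,1]^n → ℝ^{2n+1} with k-th component ψ_k(x) = Σ_{i=1}^n α_i g_k(x_i) is injective, then the image ψ([0,1]^n) is a basic subset of ℝ^{2n+1}. -/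
/-- A subset `X ⊂ ℝ^N` is basic if every continuous `f : X → ℝ` is a sum of continuous
functions `ℝ → ℝ` of the individual coordinates. -/
def IsBasic {N : ℕ} (X : Set (Fin N → ℝ)) : Prop :=
  ∀ f : X → ℝ, Continuous f → ∃ φ : Fin N → ℝ → ℝ,
    (∀ k, Continuous (φ k)) ∧ ∀ x : X, f x = ∑ k, φ k ((x : Fin N → ℝ) k)

theorem stmt7 (n : ℕ) (hn : 0 < n) (α : Fin n → ℝ)
    (g : Fin (2*n+1) → ℝ → ℝ)
    (hgc : ∀ k, ContinuousOn (g k) (Set.Icc 0 1))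
    (hgm : ∀ k, Set.MapsTo (g k) (Set.Icc 0 1) (Set.Icc 0 1))
    (cube : Set (Fin n → ℝ)) (hcube : cube = {x | ∀ i, x i ∈ Set.Icc (0:ℝ) 1})
    (ψ : (Fin n → ℝ) → (Fin (2*n+1) → ℝ))
    (hψ : ∀ x k, ψ x k = ∑ i, α i * g k (x i))
    (hK : ∀ f : (Fin n → ℝ) → ℝ, ContinuousOn f cube →
      ∃ h : ℝ → ℝ, Continuous h ∧ ∀ x ∈ cube, f x = ∑ k, h (ψ x k))
    (hinj : Set.InjOn ψ cube) :
    IsBasic (ψ '' cube) := by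
  intro f hf
  -- continuity of ψ on the cube
  have hψc : ContinuousOn ψ cube := by
    rw [continuousOn_pi]
    intro k
    have : ContinuousOn (fun x : Fin n → ℝ => ∑ i, α i * g k (x i)) cube := by
      apply continuousOn_finset_sum
      intro i _
      apply ContinuousOn.mul continuousOn_const
      apply (hgc k).comp (continuous_apply i).continuousOn
      intro x hx
      rw [hcube] at hx
      exact hx i
    exact this.congr (fun x _ => hψ x k)
  -- the lifted map into the image
  have hmem : ∀ x : cube, ψ (x : Fin n → ℝ) ∈ ψ '' cube := fun x => ⟨x, x.2, rfl⟩
  set e : cube → (ψ '' cube : Set (Fin (2*n+1) → ℝ)) := fun x => ⟨ψ x, hmem x⟩ with he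
  have hec : Continuous e := Continuous.subtype_mk hψc.restrict _
  -- the composed function on the cube
  classical
  set F : (Fin n → ℝ) → ℝ := fun x => if hx : x ∈ cube then f ⟨ψ x, ⟨x, hx, rfl⟩⟩ else 0
    with hF
  have hFc : ContinuousOn F cube := by
    rw [continuousOn_iff_continuous_restrict]
    have : cube.domRestrict F = f ∘ e := by
      funext x
      simp only [Set.domRestrict_apply, hF, dif_pos x.2, he, Function.comp]
    rw [this]
    exact hf.comp hec
  obtain ⟨h, hhc, hh⟩ := hK F hFc
  refine ⟨fun _ => h, fun _ => hhc, ?_⟩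
  rintro ⟨y, x, hx, rfl⟩
  calc f ⟨ψ x, ⟨x, hx, rfl⟩⟩ = F x := by rw [hF]; beta_reduce; rw [dif_pos hx]
    _ = ∑ k, h (ψ x k) := hh x hx
end

section
/- The vertex set {0,1}^{2n} of the 2n-dimensional unit cube, indexed as an n-dimensional array of size 4 (i.e. a bijection [4]^n → {0,1}^{2n}), can be arranged so that it forms a Sternfeld array of size 4 in ℝ^{2n}: there is an injective map a : [4]^n → {0,1}^{2n} ⊂ ℝ^{2n} such that for every pair of voxels i, j adjacent in coordinate t, the ξ(i,j,t)-th coordinates of a_i and a_j are equal, where ξ(i,j,t) = 2t − (i_t mod 2). -/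
/-- The Gray-code bits: `nbit v 0 = v / 2`, `nbit v 1 = (v + v/2) % 2`. -/
def nbit (v r : ℕ) : ℕ := if r % 2 = 0 then v / 2 else (v + v / 2) % 2

lemma nbit_le (v r : ℕ) (hv : v < 4) : nbit v r = 0 ∨ nbit v r = 1 := by
  unfold nbit; split <;> omega

lemma nbit_inj : ∀ v w : Fin 4, nbit v.1 0 = nbit w.1 0 → nbit v.1 1 = nbit w.1 1 → v = w := by
  decide

theorem stmt8 (n : ℕ) :
    ∃ a : (Fin n → Fin 4) → (Fin (2*n) → ℝ),
      Function.Injective a ∧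
      (∀ i k, a i k = 0 ∨ a i k = 1) ∧
      (∀ v : Fin (2*n) → ℝ, (∀ k, v k = 0 ∨ v k = 1) → ∃ i, a i = v) ∧
      (∀ (i j : Fin n → Fin 4) (t : Fin n), adjacentVox i j t →
        a i (xiIdx i t) = a j (xiIdx i t)) := by
  refine ⟨fun i k => (nbit (i ⟨k.1 / 2, by have := k.isLt; omega⟩).1 k.1 : ℕ), ?_, ?_, ?_, ?_⟩
  · -- injective
    intro i j h
    funext t
    have h0 := congrFun h ⟨2 * t.1, by have := t.isLt; omega⟩
    have h1 := congrFun h ⟨2 * t.1 + 1, by have := t.isLt; omega⟩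
    simp only [Nat.cast_inj] at h0 h1
    have e0 : (2 * t.1) / 2 = t.1 := by omega
    have e1 : (2 * t.1 + 1) / 2 = t.1 := by omega
    have ht0 : (⟨(2 * t.1) / 2, by have := t.isLt; omega⟩ : Fin n) = t := by
      exact Fin.ext e0
    have ht1 : (⟨(2 * t.1 + 1) / 2, by have := t.isLt; omega⟩ : Fin n) = t := by
      exact Fin.ext e1
    rw [ht0] at h0
    rw [ht1] at h1
    have m0 : nbit (i t).1 0 = nbit (j t).1 0 := by
      simpa [nbit, Nat.mul_mod_right] using h0
    have m1 : nbit (i t).1 1 = nbit (j t).1 1 := by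
      have : (2 * t.1 + 1) % 2 = 1 := by omega
      simpa [nbit, this] using h1
    exact nbit_inj _ _ m0 m1
  · -- 0/1 valued
    intro i k
    rcases nbit_le (i ⟨k.1 / 2, by have := k.isLt; omega⟩).1 k.1 (i _).isLt with h | h <;>
      simp [h]
  · -- surjective onto cube vertices
    intro v hv
    classical
    set e : ℕ → ℕ := fun k => if h : k < 2 * n then (if v ⟨k, h⟩ = 1 then 1 else 0) else 0 with he
    have he01 : ∀ k, e k = 0 ∨ e k = 1 := by
      intro k; simp only [he]; split
      · split <;> [right; left] <;> rfl
      · left; rfl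
    have hev : ∀ k : Fin (2 * n), (e k.1 : ℝ) = v k := by
      intro k
      simp only [he, dif_pos k.isLt]
      rcases hv k with h | h <;> simp [h, Fin.eta]
    refine ⟨fun t => ⟨2 * e (2 * t.1) + (e (2 * t.1) + e (2 * t.1 + 1)) % 2, by
      rcases he01 (2 * t.1) with h | h <;> omega⟩, ?_⟩
    funext k
    rw [← hev k]
    show ((nbit (2 * e (2 * (k.1 / 2)) + (e (2 * (k.1 / 2)) + e (2 * (k.1 / 2) + 1)) % 2) k.1 : ℕ) : ℝ) = (e k.1 : ℝ)
    norm_cast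
    set t : ℕ := k.1 / 2 with ht
    have hk : k.1 = 2 * t ∨ k.1 = 2 * t + 1 := by omega
    have h0 := he01 (2 * t)
    have h1 := he01 (2 * t + 1)
    simp only [nbit]
    rcases hk with hk | hk <;> rw [hk] <;> split <;> omega
  · -- Sternfeld condition
    intro i j t hadj
    obtain ⟨hjt, hoth⟩ := hadj
    simp only [xiIdx, Nat.cast_inj]
    have e2 : (2 * t.1 + (i t).1 % 2) / 2 = t.1 := by omega
    have ht' : ∀ p, (⟨(2 * t.1 + (i t).1 % 2) / 2, p⟩ : Fin n) = t := fun p => Fin.ext e2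
    simp only [ht']
    have hi4 := (i t).isLt
    have hj4 := (j t).isLt
    unfold nbit
    split <;> omega
end

section
/- Let X ⊂ ℝ^{2n} be a compact set that contains Sternfeld arrays of arbitrarily large size, i.e. for every positive integer m there exists an injective map a : [m]^n → X such that for every pair of voxels i, j ∈ [m]^n adjacent in coordinate t, the ξ(i,j,t)-th coordinates of a_i and a_j coincide, where ξ(i,j,t) = 2t − (i_t mod 2) (with j_t = i_t + 1). Then X is not basic: there exists a continuous function F : X → ℝ that cannot be written as F(x) = Σ_{k=1}^{2n} φ_k(x_k) on X for any continuous functions φ_1,…,φ_{2n} : ℝ → ℝ. -/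
set_option maxHeartbeats 1000000

lemma card_ne_fun {n m : ℕ} (t : Fin n) :
    Fintype.card ({s : Fin n // s ≠ t} → Fin m) = m ^ (n - 1) := by
  rw [Fintype.card_fun, Fintype.card_fin]
  congr 1
  have h1 : Fintype.card {s : Fin n // s = t} = 1 := Fintype.card_subtype_eq t
  have h2 := Fintype.card_subtype_compl (fun s : Fin n => s = t)
  simp only [h1, Fintype.card_fin] at h2
  simpa using h2

lemma sum_update_nat {n m : ℕ} (i : Fin n → Fin m) (t : Fin n) (v : Fin m) :
    (∑ s, ((Function.update i t v) s).1) + (i t).1 = (∑ s, (i s).1) + v.1 := by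
  classical
  have h1 : ∀ s, ((Function.update i t v) s).1
      = Function.update (fun s => (i s).1) t v.1 s := fun s =>
    Function.apply_update (fun _ (x : Fin m) => x.1) i t v s
  rw [Finset.sum_congr rfl (fun s _ => h1 s),
    Finset.sum_update_of_mem (Finset.mem_univ t),
    ← Finset.add_sum_erase _ _ (Finset.mem_univ t), Finset.erase_eq]
  ring

lemma key_bound {n m : ℕ} (hm : 0 < m)
    (K : Set ℝ) (a : (Fin n → Fin m) → (Fin (2*n) → ℝ))
    (hadj : ∀ (i j : Fin n → Fin m) (t : Fin n), adjacentVox i j t →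
        a i (xiIdx i t) = a j (xiIdx i t))
    (ψ : Fin (2*n) → C(K, ℝ)) (C : ℝ) (hC : ∀ k y, |ψ k y| ≤ C)
    (hmem : ∀ i k, a i k ∈ K) (k : Fin (2*n)) :
    |∑ i : Fin n → Fin m, (-1:ℝ)^(∑ s, (i s).1) * ψ k ⟨a i k, hmem i k⟩|
      ≤ 2 * m^(n-1) * C := by
  classical
  have hC0 : 0 ≤ C := le_trans (abs_nonneg _) (hC k ⟨a (fun _ => ⟨0, hm⟩) k, hmem _ k⟩)
  obtain ⟨t, b, hbval, hk⟩ : ∃ (t : Fin n) (b : ℕ), b < 2 ∧ k.1 = 2*t.1 + b := by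
    refine ⟨⟨k.1/2, by have := k.isLt; omega⟩, k.1 % 2, by omega, by simp; omega⟩
  set term : (Fin n → Fin m) → ℝ :=
    fun i => (-1:ℝ)^(∑ s, (i s).1) * ψ k ⟨a i k, hmem i k⟩ with hterm
  set P : (Fin n → Fin m) → Prop :=
    fun i => ((i t).1 % 2 = b ∧ (i t).1 + 1 < m) ∨ ((i t).1 % 2 ≠ b ∧ 0 < (i t).1) with hP
  set v : (Fin n → Fin m) → ℕ :=
    fun i => if (i t).1 % 2 = b ∧ (i t).1 + 1 < m then (i t).1 + 1 else (i t).1 - 1 with hv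
  have hvlt : ∀ i, v i < m := by
    intro i; have := (i t).2
    simp only [hv]; split <;> omega
  set nxt : (Fin n → Fin m) → (Fin n → Fin m) :=
    fun i => Function.update i t ⟨v i, hvlt i⟩ with hnxt
  have hnt : ∀ i, ((nxt i) t).1 = v i := by
    intro i; simp [hnxt]
  have hns : ∀ i s, s ≠ t → nxt i s = i s := by
    intro i s hs; simp [hnxt, Function.update_of_ne hs]
  have hsum : ∀ i, (∑ s, ((nxt i) s).1) + (i t).1 = (∑ s, (i s).1) + v i := by
    intro i; simpa [hnxt] using sum_update_nat i t ⟨v i, hvlt i⟩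
  have hcancel : ∀ i, P i → term i + term (nxt i) = 0 ∧ nxt i ≠ i ∧ P (nxt i)
      ∧ nxt (nxt i) = i := by
    intro i hPi
    have hne : nxt i ≠ i := by
      intro hcon
      have h1 := congr_arg Fin.val (congr_fun hcon t)
      rw [hnt] at h1
      have := (i t).2
      rw [hP] at hPi
      simp only [hv] at h1; split at h1 <;> omega
    by_cases hpar : (i t).1 % 2 = b
    · have hlt : (i t).1 + 1 < m := by
        rcases hPi with h | h
        · exact h.2
        · exact absurd hpar h.1
      have hvA : v i = (i t).1 + 1 := if_pos ⟨hpar, hlt⟩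
      have hjt : ((nxt i) t).1 = (i t).1 + 1 := by rw [hnt, hvA]
      have hadjacent : adjacentVox i (nxt i) t := ⟨hjt, hns i⟩
      have hxik : xiIdx i t = k := by
        apply Fin.ext; simp only [xiIdx]; omega
      have haeq : a i k = a (nxt i) k := by
        have := hadj i (nxt i) t hadjacent; rwa [hxik] at this
      have hexp : (∑ s, ((nxt i) s).1) = (∑ s, (i s).1) + 1 := by
        have := hsum i; omega
      have hvB : v (nxt i) = (i t).1 := by
        have hcond : ¬(((nxt i) t).1 % 2 = b ∧ ((nxt i) t).1 + 1 < m) := by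
          rw [hjt]; omega
        rw [hv]; simp only [if_neg hcond]; omega
      refine ⟨?_, hne, ?_, ?_⟩
      · rw [hterm]
        simp only
        rw [hexp, pow_succ]
        have : (⟨a (nxt i) k, hmem (nxt i) k⟩ : K) = ⟨a i k, hmem i k⟩ :=
          Subtype.ext haeq.symm
        rw [this]; ring
      · rw [hP]; right
        rw [hjt]; constructor <;> omega
      · funext s
        by_cases hs : s = t
        · subst hs
          apply Fin.ext
          rw [hnt, hvB]
        · rw [hns _ _ hs, hns _ _ hs]
    · have hpos : 0 < (i t).1 := by
        rcases hPi with h | h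
        · exact absurd h.1 hpar
        · exact h.2
      have hvA : v i = (i t).1 - 1 := if_neg (fun h => hpar h.1)
      have hjt : ((nxt i) t).1 = (i t).1 - 1 := by rw [hnt, hvA]
      have hadjacent : adjacentVox (nxt i) i t := by
        refine ⟨by omega, fun s hs => (hns i s hs).symm⟩
      have hxik : xiIdx (nxt i) t = k := by
        apply Fin.ext; simp only [xiIdx]
        rw [hjt]; omega
      have haeq : a (nxt i) k = a i k := by
        have := hadj (nxt i) i t hadjacent; rwa [hxik] at this
      have hexp : (∑ s, (i s).1) = (∑ s, ((nxt i) s).1) + 1 := by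
        have := hsum i; omega
      have hvB : v (nxt i) = (i t).1 := by
        have hcond : (((nxt i) t).1 % 2 = b ∧ ((nxt i) t).1 + 1 < m) := by
          rw [hjt]; have := (i t).2; omega
        rw [hv]; simp only [if_pos hcond]; omega
      refine ⟨?_, hne, ?_, ?_⟩
      · rw [hterm]
        simp only
        rw [hexp, pow_succ]
        have : (⟨a (nxt i) k, hmem (nxt i) k⟩ : K) = ⟨a i k, hmem i k⟩ :=
          Subtype.ext haeq
        rw [this]; ring
      · rw [hP]; left
        rw [hjt]; have := (i t).2; constructor <;> omega
      · funext s
        by_cases hs : s = t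
        · subst hs
          apply Fin.ext
          rw [hnt, hvB]
        · rw [hns _ _ hs, hns _ _ hs]
  have hsumP : ∑ i ∈ Finset.univ.filter P, term i = 0 := by
    apply Finset.sum_involution (fun i _ => nxt i)
    · intro i hi
      exact (hcancel i (Finset.mem_filter.mp hi).2).1
    · intro i hi _
      exact (hcancel i (Finset.mem_filter.mp hi).2).2.1
    · intro i hi
      exact Finset.mem_filter.mpr ⟨Finset.mem_univ _, (hcancel i (Finset.mem_filter.mp hi).2).2.2.1⟩
    · intro i hi
      exact (hcancel i (Finset.mem_filter.mp hi).2).2.2.2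
  have hsplit := Finset.sum_filter_add_sum_filter_not Finset.univ P term
  have hcard : (Finset.univ.filter (fun i => ¬ P i)).card ≤ 2 * m ^ (n-1) := by
    have hinj : Set.InjOn (fun i : Fin n → Fin m =>
        ((decide ((i t).1 % 2 = b)), fun s : {s : Fin n // s ≠ t} => i s.1))
        ↑(Finset.univ.filter (fun i => ¬ P i)) := by
      intro i hi i' hi' heq
      simp only [Finset.coe_filter, Set.mem_setOf_eq] at hi hi'
      rw [Prod.mk.injEq] at heq
      obtain ⟨h1, h2⟩ := heq
      have hiff : ((i t).1 % 2 = b) ↔ ((i' t).1 % 2 = b) := decide_eq_decide.mp h1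
      rw [hP] at hi hi'
      funext s
      by_cases hs : s = t
      · subst hs
        apply Fin.ext
        have hb1 := (i s).2
        have hb2 := (i' s).2
        push_neg at hi hi'
        omega
      · exact congr_fun h2 ⟨s, hs⟩
    calc (Finset.univ.filter (fun i => ¬ P i)).card
        ≤ (Finset.univ : Finset (Bool × ({s : Fin n // s ≠ t} → Fin m))).card :=
          Finset.card_le_card_of_injOn _ (fun _ _ => Finset.mem_univ _) hinj
      _ = 2 * m ^ (n-1) := by
          rw [Finset.card_univ, Fintype.card_prod, Fintype.card_bool, card_ne_fun]
  calc |∑ i : Fin n → Fin m, term i|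
      = |∑ i ∈ Finset.univ.filter (fun i => ¬ P i), term i| := by
        rw [← hsplit, hsumP, zero_add]
    _ ≤ ∑ i ∈ Finset.univ.filter (fun i => ¬ P i), |term i| := Finset.abs_sum_le_sum_abs _ _
    _ ≤ ∑ i ∈ Finset.univ.filter (fun i => ¬ P i), C := by
        apply Finset.sum_le_sum
        intro i _
        rw [hterm]
        calc |(-1:ℝ)^(∑ s, (i s).1) * ψ k ⟨a i k, hmem i k⟩|
            = |(-1:ℝ)^(∑ s, (i s).1)| * |ψ k ⟨a i k, hmem i k⟩| := abs_mul _ _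
          _ = |ψ k ⟨a i k, hmem i k⟩| := by
              rw [abs_pow, abs_neg, abs_one, one_pow, one_mul]
          _ ≤ C := hC k _
    _ = (Finset.univ.filter (fun i => ¬ P i)).card * C := by
        rw [Finset.sum_const, nsmul_eq_mul]
    _ ≤ (2 * m ^ (n-1) : ℕ) * C := by
        apply mul_le_mul_of_nonneg_right _ hC0
        exact_mod_cast hcard
    _ = 2 * m^(n-1) * C := by push_cast; ring

theorem stmt9 (n : ℕ) (hn : 0 < n) (X : Set (Fin (2*n) → ℝ)) (hX : IsCompact X)
    (harr : ∀ m : ℕ, 0 < m → ∃ a : (Fin n → Fin m) → (Fin (2*n) → ℝ),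
      Function.Injective a ∧ (∀ i, a i ∈ X) ∧
      ∀ (i j : Fin n → Fin m) (t : Fin n), adjacentVox i j t →
        a i (xiIdx i t) = a j (xiIdx i t)) :
    ∃ F : X → ℝ, Continuous F ∧ ∀ φ : Fin (2*n) → ℝ → ℝ,
      (∀ k, Continuous (φ k)) →
      ∃ x : X, F x ≠ ∑ k, φ k ((x : Fin (2*n) → ℝ) k) := by
  classical
  by_contra hcon
  push_neg at hcon
  -- hcon : ∀ F, Continuous F → ∃ φ, (∀ k, Continuous (φ k)) ∧ ∀ x, F x = ∑ ...
  haveI : CompactSpace X := isCompact_iff_compactSpace.mp hX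
  -- a bounding box
  obtain ⟨R, hRX⟩ : ∃ R : ℝ, ∀ x ∈ X, ∀ k, x k ∈ Set.Icc (-R) R := by
    obtain ⟨r, hr⟩ := hX.isBounded.subset_closedBall 0
    refine ⟨max r 0, fun x hx k => ?_⟩
    have h1 : ‖x‖ ≤ r := by
      have := hr hx
      rwa [Metric.mem_closedBall, dist_zero_right] at this
    have h2 : |x k| ≤ r := le_trans (norm_le_pi_norm x k) h1
    have h3 := abs_le.mp h2
    rw [Set.mem_Icc]
    constructor
    · have := le_max_left r 0
      linarith [h3.1]
    · exact le_trans h3.2 (le_max_left r 0)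
  set K : Set ℝ := Set.Icc (-R) R with hK
  -- the decomposition operator
  have hmemX : ∀ (x : X) (k : Fin (2*n)), (x : Fin (2*n) → ℝ) k ∈ K :=
    fun x k => hRX x.1 x.2 k
  set Tfun : (Fin (2*n) → C(K, ℝ)) → C(X, ℝ) := fun ψ =>
    ⟨fun x => ∑ k, ψ k ⟨(x : Fin (2*n) → ℝ) k, hmemX x k⟩, by
      apply continuous_finset_sum
      intro k _
      exact (ψ k).continuous.comp
        (Continuous.subtype_mk ((continuous_apply k).comp continuous_subtype_val) _)⟩
    with hTfun
  have hTnorm : ∀ ψ, ‖Tfun ψ‖ ≤ (2*n : ℕ) * ‖ψ‖ := by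
    intro ψ
    apply (ContinuousMap.norm_le _ (by positivity)).mpr
    intro x
    rw [hTfun]
    simp only [ContinuousMap.coe_mk]
    calc ‖∑ k, ψ k ⟨(x : Fin (2*n) → ℝ) k, hmemX x k⟩‖
        ≤ ∑ k : Fin (2*n), ‖ψ k ⟨(x : Fin (2*n) → ℝ) k, hmemX x k⟩‖ :=
          norm_sum_le _ _
      _ ≤ ∑ k : Fin (2*n), ‖ψ‖ := by
          apply Finset.sum_le_sum
          intro k _
          exact le_trans (ContinuousMap.norm_coe_le_norm (ψ k) _) (norm_le_pi_norm ψ k)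
      _ = (2*n : ℕ) * ‖ψ‖ := by
          rw [Finset.sum_const, Finset.card_univ, Fintype.card_fin, nsmul_eq_mul]
  set T : (Fin (2*n) → C(K, ℝ)) →L[ℝ] C(X, ℝ) :=
    LinearMap.mkContinuous
      { toFun := Tfun
        map_add' := by
          intro ψ ψ'
          ext x
          simp [hTfun, Finset.sum_add_distrib]
        map_smul' := by
          intro c ψ
          ext x
          simp [hTfun, Finset.mul_sum] }
      (2*n : ℕ) hTnorm with hT
  have hTapp : ∀ ψ x, T ψ x = ∑ k, ψ k ⟨(x : Fin (2*n) → ℝ) k, hmemX x k⟩ := by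
    intro ψ x; rfl
  have hsurj : Function.Surjective T := by
    intro g
    obtain ⟨φ, hφc, hφ⟩ := hcon g g.continuous
    refine ⟨fun k => ⟨fun y => φ k y.1, (hφc k).comp continuous_subtype_val⟩, ?_⟩
    ext x
    rw [hTapp]
    exact (hφ x).symm
  obtain ⟨C, hCpos, hCp⟩ := T.exists_preimage_norm_le hsurj
  -- choose m
  set m : ℕ := ⌈4 * n * C⌉₊ + 1 with hm
  have hmpos : 0 < m := Nat.succ_pos _
  have hmbig : 4 * (n:ℝ) * C < m := by
    have h1 := Nat.le_ceil (4 * (n:ℝ) * C)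
    have h2 : (⌈4 * (n:ℝ) * C⌉₊ : ℝ) < m := by
      rw [hm]; push_cast; linarith
    linarith
  obtain ⟨a, hainj, haX, hadj⟩ := harr m hmpos
  set eps : (Fin n → Fin m) → ℝ := fun i => (-1:ℝ)^(∑ s, (i s).1) with heps
  have hepsone : ∀ i, eps i = 1 ∨ eps i = -1 := by
    intro i
    simp only [heps]
    rcases Nat.even_or_odd (∑ s, (i s).1) with h | h
    · left; exact h.neg_one_pow
    · right; exact h.neg_one_pow
  -- minimum distance
  have hIcard : Nontrivial (Fin n → Fin m) := by
    have h2m : 2 ≤ m := by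
      have hpos : (0:ℝ) < 4 * n * C := by
        have hn1 : (1:ℝ) ≤ n := by exact_mod_cast hn
        nlinarith
      have h1 : 0 < ⌈4 * (n:ℝ) * C⌉₊ := Nat.ceil_pos.mpr hpos
      omega
    refine ⟨fun _ => ⟨0, hmpos⟩, fun _ => ⟨1, h2m⟩, ?_⟩
    intro hcon'
    have h01 := congr_arg Fin.val (congr_fun hcon' ⟨0, hn⟩)
    simp at h01
  obtain ⟨i0, i1, hi01⟩ := hIcard
  set D : (Fin n → Fin m) × (Fin n → Fin m) → ℝ :=
    fun p => if p.1 = p.2 then 1 else dist (a p.1) (a p.2) with hD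
  have hsne : (Finset.univ : Finset ((Fin n → Fin m) × (Fin n → Fin m))).Nonempty :=
    ⟨(i0, i1), Finset.mem_univ _⟩
  set d : ℝ := Finset.univ.inf' hsne D with hd
  have hdpos : 0 < d := by
    rw [hd, Finset.lt_inf'_iff]
    intro p _
    rw [hD]
    by_cases hp : p.1 = p.2
    · simp [hp]
    · simp only [if_neg hp]
      exact dist_pos.mpr (fun h => hp (hainj h))
  have hdle : ∀ i j : (Fin n → Fin m), i ≠ j → d ≤ dist (a i) (a j) := by
    intro i j hij
    have h1 : d ≤ D (i, j) := by
      rw [hd]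
      exact Finset.inf'_le D (Finset.mem_univ (i, j))
    have h2 : D (i, j) = dist (a i) (a j) := by
      rw [hD]; simp only; rw [if_neg hij]
    rwa [h2] at h1
  -- the bump function
  set f0 : X → ℝ := fun x => ∑ i : (Fin n → Fin m), eps i * max 0 (1 - dist (x : Fin (2*n) → ℝ) (a i) / d)
    with hf0
  set f : X → ℝ := fun x => max (-1) (min 1 (f0 x)) with hf
  have hf0c : Continuous f0 := by
    apply continuous_finset_sum
    intro i _
    exact continuous_const.mul (continuous_const.max
      (continuous_const.sub ((continuous_subtype_val.dist continuous_const).div_const d)))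
  have hfc : Continuous f := continuous_const.max (continuous_const.min hf0c)
  have hfa : ∀ i : (Fin n → Fin m), f ⟨a i, haX i⟩ = eps i := by
    intro i
    have h0 : f0 ⟨a i, haX i⟩ = eps i := by
      rw [hf0]
      simp only
      rw [Finset.sum_eq_single i]
      · simp [dist_self]
      · intro j _ hj
        have hdj : d ≤ dist (a i) (a j) := hdle i j (Ne.symm hj)
        have : 1 - dist (a i) (a j) / d ≤ 0 := by
          rw [sub_nonpos, le_div_iff₀ hdpos, one_mul]
          exact hdj
        rw [max_eq_left this, mul_zero]
      · intro hni
        exact absurd (Finset.mem_univ i) hni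
    rw [hf]
    simp only [h0]
    rcases hepsone i with h | h <;> rw [h] <;> norm_num
  have hfb : ∀ x, |f x| ≤ 1 := by
    intro x
    rw [hf, abs_le]
    constructor
    · exact le_max_left _ _
    · apply max_le (by norm_num)
      exact min_le_left _ _
  set fC : C(X, ℝ) := ⟨f, hfc⟩ with hfC
  have hfCnorm : ‖fC‖ ≤ 1 := by
    apply (ContinuousMap.norm_le _ zero_le_one).mpr
    intro x
    rw [Real.norm_eq_abs]
    exact hfb x
  obtain ⟨ψ, hTψ, hψnorm⟩ := hCp fC
  have hψC : ‖ψ‖ ≤ C := le_trans hψnorm (by nlinarith)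
  have hψb : ∀ k y, |ψ k y| ≤ C := by
    intro k y
    calc |ψ k y| = ‖ψ k y‖ := (Real.norm_eq_abs _).symm
      _ ≤ ‖ψ k‖ := ContinuousMap.norm_coe_le_norm _ _
      _ ≤ ‖ψ‖ := norm_le_pi_norm _ _
      _ ≤ C := hψC
  have hmem : ∀ (i : (Fin n → Fin m)) (k : Fin (2*n)), a i k ∈ K := fun i k => hRX (a i) (haX i) k
  -- the two evaluations of S
  have hdecomp : ∀ i : (Fin n → Fin m), ∑ k, ψ k ⟨a i k, hmem i k⟩ = eps i := by
    intro i
    have h1 := DFunLike.congr_fun hTψ (⟨a i, haX i⟩ : X)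
    rw [hTapp] at h1
    rw [← hfa i]
    exact h1
  have hS1 : ∑ i : (Fin n → Fin m), eps i * (∑ k, ψ k ⟨a i k, hmem i k⟩) = (m^n : ℕ) := by
    rw [Finset.sum_congr rfl (fun i _ => by rw [hdecomp i])]
    have : ∀ i : (Fin n → Fin m), eps i * eps i = 1 := by
      intro i
      rcases hepsone i with h | h <;> rw [h] <;> norm_num
    rw [Finset.sum_congr rfl (fun i _ => this i)]
    rw [Finset.sum_const, Finset.card_univ, nsmul_eq_mul, mul_one]
    congr 1
    rw [Fintype.card_fun, Fintype.card_fin, Fintype.card_fin]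
  have hS2 : ∑ i : (Fin n → Fin m), eps i * (∑ k, ψ k ⟨a i k, hmem i k⟩)
      = ∑ k : Fin (2*n), ∑ i : (Fin n → Fin m), eps i * ψ k ⟨a i k, hmem i k⟩ := by
    have h1 : ∀ i : (Fin n → Fin m), eps i * (∑ k, ψ k ⟨a i k, hmem i k⟩)
        = ∑ k, eps i * ψ k ⟨a i k, hmem i k⟩ := fun i => Finset.mul_sum _ _ _
    rw [Finset.sum_congr rfl (fun i _ => h1 i)]
    exact Finset.sum_comm
  -- final contradiction
  have hbound : (m:ℝ)^n ≤ (2*n : ℕ) * (2 * m^(n-1) * C) := by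
    calc (m:ℝ)^n = |((m^n : ℕ) : ℝ)| := by
          rw [abs_of_nonneg (by positivity)]
          push_cast; ring
      _ = |∑ k : Fin (2*n), ∑ i : (Fin n → Fin m), eps i * ψ k ⟨a i k, hmem i k⟩| := by
          rw [← hS2, hS1]
      _ ≤ ∑ k : Fin (2*n), |∑ i : (Fin n → Fin m), eps i * ψ k ⟨a i k, hmem i k⟩| :=
          Finset.abs_sum_le_sum_abs _ _
      _ ≤ ∑ k : Fin (2*n), 2 * (m:ℝ)^(n-1) * C := by
          apply Finset.sum_le_sum
          intro k _
          exact key_bound hmpos K a hadj ψ C hψb hmem k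
      _ = (2*n : ℕ) * (2 * (m:ℝ)^(n-1) * C) := by
          rw [Finset.sum_const, Finset.card_univ, Fintype.card_fin, nsmul_eq_mul]
  have hfinal : (m:ℝ)^n < (m:ℝ)^n := by
    calc (m:ℝ)^n ≤ (2*n : ℕ) * (2 * m^(n-1) * C) := hbound
      _ = (4 * n * C) * (m:ℝ)^(n-1) := by push_cast; ring
      _ < (m:ℝ) * (m:ℝ)^(n-1) := by
          apply mul_lt_mul_of_pos_right hmbig
          positivity
      _ = (m:ℝ)^n := by
          rw [← pow_succ']
          congr 1
          omega
  exact lt_irrefl _ hfinal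
end
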